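/- arXiv:1912.04626 — 4 statements merged into one kernel-verified Lean document; each statement's English description precedes it below -/
import Mathlib

section
/- Let v, w : ℝ² → ℝ be C¹ vector field components such that all solutions of the planar system ẋ = v(x,y), ẏ = w(x,y) exist for all t ∈ ℝ. Suppose w(x,1) > 0 for all x and w(x,-1) < 0 for all x. Then there exists an initial condition (0, y₀) with y₀ ∈ (-1,1) whose solution (x(t), y(t)) satisfies y(t) ∈ (-1,1) for all t ≥ 0. -/
/-!
Ważewski's retract argument. Say the trajectory through `(0, s)` exits above if it gets strictly
above the strip before it gets strictly below it, and exits below in the symmetric case. By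
continuous dependence on initial data both properties are open in `s`; they are exclusive, and
transversality on the edges makes the trajectory through `(0, 1)` exit above and the one through
`(0, -1)` exit below. As `[-1, 1]` is connected, the trajectory through some `(0, s)` does
neither, and it never reaches an edge: at the first time it did, the vector field would push it
strictly out of the strip, so it would exit after all.
-/

open Set Filter Topology Metric

lemma IsClosed.exists_first_mem {S : Set ℝ} (hS : IsClosed S) {a t : ℝ} (hat : a ≤ t)
    (ht : t ∈ S) : ∃ t₀ ∈ S, t₀ ∈ Icc a t ∧ ∀ u ∈ Ico a t₀, u ∉ S := by
  obtain ⟨t₀, ⟨ht₀S, ht₀⟩, hleast⟩ :=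
    (isCompact_Icc.inter_left hS).exists_isLeast ⟨t, ht, hat, le_rfl⟩
  exact ⟨t₀, ht₀S, ht₀, fun u hu huS => (hleast ⟨huS, hu.1, hu.2.le.trans ht₀.2⟩).not_gt hu.2⟩

lemma HasDerivAt.eventually_nhdsGT_lt {f : ℝ → ℝ} {f' x : ℝ} (hf : HasDerivAt f f' x)
    (hf' : 0 < f') : ∀ᶠ y in 𝓝[>] x, f x < f y := by
  have hslope := (hasDerivAt_iff_tendsto_slope.mp hf).eventually (eventually_gt_nhds hf')
  filter_upwards [nhdsGT_le_nhdsNE x hslope, self_mem_nhdsWithin] with y hy hxy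
  rw [slope_def_field, div_pos_iff_of_pos_right (sub_pos.2 hxy)] at hy
  linarith

theorem tendstoUniformlyOn_Icc_of_isIntegralCurve {E : Type*} [NormedAddCommGroup E]
    [NormedSpace ℝ E] [ProperSpace E] {F : E → E} (hF : LocallyLipschitz F)
    {ι : Type*} [TopologicalSpace ι] {Γ : ι → ℝ → E} (hΓ : ∀ i, IsIntegralCurve (Γ i) fun _ => F)
    {i : ι} (h₀ : ContinuousAt (fun j => Γ j 0) i) (t : ℝ) :
    TendstoUniformlyOn Γ (Γ i) (𝓝 i) (Icc 0 t) := by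
  rw [Metric.tendstoUniformlyOn_iff]
  intro ε hε
  set K := Γ i '' Icc 0 t
  obtain ⟨L, hL⟩ := hF.locallyLipschitzOn.exists_lipschitzOnWith_of_compact
    ((isCompact_Icc.image (hΓ i).continuous).cthickening (r := ε))
  have hδ : 0 < ε / Real.exp (L * t) := by positivity
  filter_upwards [Metric.tendsto_nhds.mp h₀ _ hδ] with j hj
  by_contra! hfar
  obtain ⟨τ, hτ, hετ⟩ := hfar
  obtain ⟨u, hεu, hu, hbefore⟩ := IsClosed.exists_first_mem
    (isClosed_le continuous_const ((hΓ i).continuous.dist (hΓ j).continuous)) hτ.1 hετ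
  have hut : u ≤ t := hu.2.trans hτ.2
  have hmemK : ∀ s ∈ Ico 0 u, Γ i s ∈ K := fun s hs => mem_image_of_mem _ ⟨hs.1, hs.2.le.trans hut⟩
  -- Up to the first time the curves are `ε` apart, both stay where `F` is `L`-Lipschitz.
  have hgronwall := dist_le_of_trajectories_ODE_of_mem (v := fun _ => F)
    (s := fun _ => cthickening ε K) (fun _ _ => hL) (hΓ j).continuous.continuousOn
    (fun s _ => (hΓ j s).hasDerivWithinAt)
    (fun s hs => mem_cthickening_of_dist_le _ _ _ _ (hmemK s hs)
      (by rw [dist_comm]; exact (not_le.mp (hbefore s hs)).le))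
    (hΓ i).continuous.continuousOn (fun s _ => (hΓ i s).hasDerivWithinAt)
    (fun s hs => self_subset_cthickening K (hmemK s hs)) le_rfl u ⟨hu.1, le_rfl⟩
  have hexp : Real.exp (L * (u - 0)) ≤ Real.exp (L * t) := by
    gcongr
    linarith
  have hstart : dist (Γ j 0) (Γ i 0) * Real.exp (L * t) < ε := by
    rwa [← lt_div_iff₀ (Real.exp_pos _)]
  have hεu : ε ≤ dist (Γ j u) (Γ i u) := dist_comm (Γ i u) (Γ j u) ▸ hεu
  linarith [mul_le_mul_of_nonneg_left hexp (dist_nonneg (x := Γ j 0) (y := Γ i 0))]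

section Strip

variable {a b : ℝ}

def ExitsAbove (a b : ℝ) (y : ℝ → ℝ) : Prop :=
  ∃ t ≥ 0, b < y t ∧ ∀ τ ∈ Icc 0 t, a < y τ

def ExitsBelow (a b : ℝ) (y : ℝ → ℝ) : Prop :=
  ∃ t ≥ 0, y t < a ∧ ∀ τ ∈ Icc 0 t, y τ < b

lemma exitsBelow_iff_exitsAbove_neg {y : ℝ → ℝ} : ExitsBelow a b y ↔ ExitsAbove (-b) (-a) (-y) := by
  simp only [ExitsBelow, ExitsAbove, Pi.neg_apply, neg_lt_neg_iff]

lemma not_exitsAbove_and_exitsBelow (y : ℝ → ℝ) : ¬(ExitsAbove a b y ∧ ExitsBelow a b y) := by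
  rintro ⟨⟨t₁, ht₁, hup, habove⟩, ⟨t₂, ht₂, hdown, hbelow⟩⟩
  rcases le_total t₁ t₂ with h | h
  · linarith [hbelow t₁ ⟨ht₁, h⟩]
  · linarith [habove t₂ ⟨ht₂, h⟩]

lemma exitsAbove_of_hasDerivAt {y : ℝ → ℝ} {t₀ d : ℝ} (ht₀ : 0 ≤ t₀) (hy : HasDerivAt y d t₀)
    (hd : 0 < d) (hyt₀ : y t₀ = b) (hab : a < b) (hbefore : ∀ τ ∈ Ico 0 t₀, a < y τ) :
    ExitsAbove a b y := by
  have hnear : ∀ᶠ τ in 𝓝 t₀, a < y τ := hy.continuousAt.eventually (lt_mem_nhds (hyt₀ ▸ hab))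
  obtain ⟨ε, hε, hball⟩ := Metric.eventually_nhds_iff.mp hnear
  obtain ⟨t₁, hup, ht₁⟩ :=
    ((hy.eventually_nhdsGT_lt hd).and (Ioo_mem_nhdsGT (lt_add_of_pos_right t₀ hε))).exists
  refine ⟨t₁, by linarith [ht₁.1], hyt₀ ▸ hup, fun τ hτ => ?_⟩
  rcases lt_or_ge τ t₀ with h | h
  · exact hbefore τ ⟨hτ.1, h⟩
  · exact hball (by rw [Real.dist_eq, abs_lt]; constructor <;> linarith [hτ.2, ht₁.2])

lemma exitsBelow_of_hasDerivAt {y : ℝ → ℝ} {t₀ d : ℝ} (ht₀ : 0 ≤ t₀) (hy : HasDerivAt y d t₀)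
    (hd : d < 0) (hyt₀ : y t₀ = a) (hab : a < b) (hbefore : ∀ τ ∈ Ico 0 t₀, y τ < b) :
    ExitsBelow a b y :=
  exitsBelow_iff_exitsAbove_neg.2 <| exitsAbove_of_hasDerivAt ht₀ hy.neg (neg_pos.2 hd)
    (by simp [hyt₀]) (neg_lt_neg hab) fun τ hτ => neg_lt_neg (hbefore τ hτ)

lemma isOpen_setOf_exitsAbove {ι : Type*} [TopologicalSpace ι] {Y : ι → ℝ → ℝ}
    (hY : ∀ i, Continuous (Y i)) (hYunif : ∀ i t, TendstoUniformlyOn Y (Y i) (𝓝 i) (Icc 0 t)) :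
    IsOpen {i | ExitsAbove a b (Y i)} := by
  refine isOpen_iff_eventually.2 fun i ⟨t, ht, hup, habove⟩ => ?_
  obtain ⟨a', ha', hlow⟩ := isCompact_Icc.exists_forall_le' (hY i).continuousOn habove
  have hmargin : 0 < min (Y i t - b) (a' - a) := lt_min (by linarith) (by linarith)
  filter_upwards [Metric.tendstoUniformlyOn_iff.mp (hYunif i t) _ hmargin] with j hj
  have hclose : ∀ τ ∈ Icc 0 t, |Y i τ - Y j τ| < min (Y i t - b) (a' - a) := fun τ hτ => by
    simpa only [Real.dist_eq] using hj τ hτ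
  refine ⟨t, ht, ?_, fun τ hτ => ?_⟩
  · linarith [(abs_lt.mp (hclose t ⟨ht, le_rfl⟩)).2, min_le_left (Y i t - b) (a' - a)]
  · linarith [(abs_lt.mp (hclose τ hτ)).2, min_le_right (Y i t - b) (a' - a), hlow τ hτ]

lemma isOpen_setOf_exitsBelow {ι : Type*} [TopologicalSpace ι] {Y : ι → ℝ → ℝ}
    (hY : ∀ i, Continuous (Y i)) (hYunif : ∀ i t, TendstoUniformlyOn Y (Y i) (𝓝 i) (Icc 0 t)) :
    IsOpen {i | ExitsBelow a b (Y i)} := by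
  simp only [exitsBelow_iff_exitsAbove_neg]
  exact isOpen_setOf_exitsAbove (Y := -Y) (fun i => (hY i).neg) fun i t => (hYunif i t).neg

lemma mem_Ioo_of_not_exitsAbove_of_not_exitsBelow {y y' : ℝ → ℝ}
    (hy : ∀ t, HasDerivAt y (y' t) t) (htop : ∀ t, y t = b → 0 < y' t)
    (hbot : ∀ t, y t = a → y' t < 0) (h₀ : y 0 ∈ Ioo a b) (hA : ¬ExitsAbove a b y)
    (hB : ¬ExitsBelow a b y) {t : ℝ} (ht : 0 ≤ t) : y t ∈ Ioo a b := by
  have hcont : Continuous y := continuous_iff_continuousAt.2 fun t => (hy t).continuousAt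
  by_contra hout
  obtain ⟨t₀, hexit, ht₀, hbefore⟩ :=
    IsClosed.exists_first_mem (isOpen_Ioo.preimage hcont).isClosed_compl ht hout
  have hinside : ∀ τ ∈ Ico 0 t₀, y τ ∈ Ioo a b := fun τ hτ => not_not.1 (hbefore τ hτ)
  have ht₀pos : 0 < t₀ := ht₀.1.lt_of_ne (by rintro rfl; exact hexit h₀)
  have hedge : y t₀ ∈ Icc a b := by
    have hsub : Icc 0 t₀ ⊆ y ⁻¹' Icc a b := by
      rw [← closure_Ico ht₀pos.ne]
      exact closure_minimal (fun τ hτ => Ioo_subset_Icc_self (hinside τ hτ))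
        (isClosed_Icc.preimage hcont)
    exact hsub ⟨ht₀.1, le_rfl⟩
  have hab : a < b := h₀.1.trans h₀.2
  rcases eq_endpoints_or_mem_Ioo_of_mem_Icc hedge with h | h | h
  · exact hB (exitsBelow_of_hasDerivAt ht₀.1 (hy t₀) (hbot t₀ h) h hab fun τ hτ => (hinside τ hτ).2)
  · exact hA (exitsAbove_of_hasDerivAt ht₀.1 (hy t₀) (htop t₀ h) h hab fun τ hτ => (hinside τ hτ).1)
  · exact hexit h

end Strip

/-- Ważewski trapping in a strip for an autonomous planar system. -/
theorem stmt_0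
    (v w : ℝ → ℝ → ℝ)
    (hv : ContDiff ℝ 1 (fun p : ℝ × ℝ => v p.1 p.2))
    (hw : ContDiff ℝ 1 (fun p : ℝ × ℝ => w p.1 p.2))
    -- all solutions exist globally: through every point there is a global solution
    (hglobal : ∀ p : ℝ × ℝ, ∃ x y : ℝ → ℝ,
      x 0 = p.1 ∧ y 0 = p.2 ∧
      (∀ t : ℝ, HasDerivAt x (v (x t) (y t)) t) ∧
      (∀ t : ℝ, HasDerivAt y (w (x t) (y t)) t))
    (htop : ∀ x : ℝ, 0 < w x 1)
    (hbot : ∀ x : ℝ, w x (-1) < 0) :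
    ∃ y₀ ∈ Ioo (-1 : ℝ) 1, ∃ x y : ℝ → ℝ,
      x 0 = 0 ∧ y 0 = y₀ ∧
      (∀ t : ℝ, HasDerivAt x (v (x t) (y t)) t) ∧
      (∀ t : ℝ, HasDerivAt y (w (x t) (y t)) t) ∧
      ∀ t : ℝ, 0 ≤ t → y t ∈ Ioo (-1 : ℝ) 1 := by
  choose X Y hX₀ hY₀ hX hY using fun s : ℝ => hglobal (0, s)
  have hΓ : ∀ s, IsIntegralCurve (fun u => (X s u, Y s u))
      fun _ p => (v p.1 p.2, w p.1 p.2) := fun s u => (hX s u).prodMk (hY s u)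
  have hYunif : ∀ s t, TendstoUniformlyOn Y (Y s) (𝓝 s) (Icc 0 t) := fun s t =>
    uniformContinuous_snd.comp_tendstoUniformlyOn <|
      tendstoUniformlyOn_Icc_of_isIntegralCurve (hv.prodMk hw).locallyLipschitz hΓ
        (by simp only [hX₀, hY₀]; fun_prop) t
  have hYcont : ∀ s, Continuous (Y s) := fun s => (hΓ s).continuous.snd
  have hA₁ : ExitsAbove (-1) 1 (Y 1) := exitsAbove_of_hasDerivAt le_rfl (hY 1 0)
    (hY₀ 1 ▸ htop _) (hY₀ 1) (by norm_num) (by simp)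
  have hB₁ : ExitsBelow (-1) 1 (Y (-1)) := exitsBelow_of_hasDerivAt le_rfl (hY (-1) 0)
    (hY₀ (-1) ▸ hbot _) (hY₀ (-1)) (by norm_num) (by simp)
  obtain ⟨s, hs, hA, hB⟩ :
      ∃ s ∈ Icc (-1 : ℝ) 1, ¬ExitsAbove (-1) 1 (Y s) ∧ ¬ExitsBelow (-1) 1 (Y s) := by
    by_contra! hcover
    obtain ⟨s, -, hA, hB⟩ := isPreconnected_Icc _ _ (isOpen_setOf_exitsAbove hYcont hYunif)
      (isOpen_setOf_exitsBelow hYcont hYunif) (fun s hs => or_iff_not_imp_left.2 (hcover s hs))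
      ⟨1, by norm_num, hA₁⟩ ⟨-1, by norm_num, hB₁⟩
    exact not_exitsAbove_and_exitsBelow _ ⟨hA, hB⟩
  have hs' : s ∈ Ioo (-1 : ℝ) 1 :=
    ⟨hs.1.lt_of_ne (by rintro rfl; exact hB hB₁), hs.2.lt_of_ne (by rintro rfl; exact hA hA₁)⟩
  refine ⟨s, hs', X s, Y s, hX₀ s, hY₀ s, hX s, hY s, fun t ht => ?_⟩
  exact mem_Ioo_of_not_exitsAbove_of_not_exitsBelow (hY s) (fun t h => h ▸ htop _)
    (fun t h => h ▸ hbot _) (hY₀ s ▸ hs') hA hB ht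
end

section
/- Let f : ℝ → ℝ be continuous and T-periodic. Then the pendulum equation ẍ = f(t) sin x − cos x has a T-periodic solution x(t) with 0 < x(t) < π for all t. -/
/-!
Write `ẍ = F(t, x)` with `F t x = f t * sin x - cos x` as `ẍ - ω² x = F(t, x) - ω² x`, where
`ω² = M + 1` and `|f| ≤ M`. Then the right-hand side is antitone in `x`, while the bounded Green
operator of `d²/dt² - ω²` on `ℝ` (convolution with `-(2ω)⁻¹ exp (-ω|t|)`) is order-reversing and
commutes with translations, so the composite operator is monotone and preserves `T`-periodicity.
For `ε = arctan (M + 1)⁻¹` we have `|f t sin ε| ≤ cos ε`, so the constants `ε` and `π - ε` are a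
lower and an upper solution and the operator maps the order interval `[ε, π - ε]` into itself.
Iterating from `ε` gives a monotone sequence of periodic functions whose limit is, by dominated
convergence, a fixed point, hence a `T`-periodic solution with values in `[ε, π - ε]`.
-/

open Set Real MeasureTheory Filter Topology

namespace PeriodicSolution

section TailIntegral

variable {g : ℝ → ℝ}

lemma intervalIntegrable_of_integrableOn_Iic (hg : ∀ t, IntegrableOn g (Iic t)) (a b : ℝ) :
    IntervalIntegrable g volume a b :=
  ((hg (max a b)).mono_set fun _ hx => hx.2).intervalIntegrable

lemma intervalIntegrable_of_integrableOn_Ioi (hg : ∀ t, IntegrableOn g (Ioi t)) (a b : ℝ) :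
    IntervalIntegrable g volume a b :=
  ((hg (min a b - 1)).mono_set fun _ hx => by
    simp only [mem_Ioi]; linarith [hx.1]).intervalIntegrable

lemma integral_Iic_eq_add (hg : ∀ t, IntegrableOn g (Iic t)) (t : ℝ) :
    ∫ s in Iic t, g s = (∫ s in Iic 0, g s) + ∫ s in (0 : ℝ)..t, g s := by
  rw [← intervalIntegral.integral_Iic_sub_Iic (hg 0) (hg t)]
  ring

lemma integral_Ioi_eq_sub (hg : ∀ t, IntegrableOn g (Ioi t)) (t : ℝ) :
    ∫ s in Ioi t, g s = (∫ s in Ioi 0, g s) - ∫ s in (0 : ℝ)..t, g s := by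
  rw [← intervalIntegral.integral_Ioi_sub_Ioi' (hg 0) (hg t)]
  ring

lemma continuous_integral_Iic (hg : ∀ t, IntegrableOn g (Iic t)) :
    Continuous fun t => ∫ s in Iic t, g s := by
  rw [funext (integral_Iic_eq_add hg)]
  exact continuous_const.add
    (intervalIntegral.continuous_primitive (intervalIntegrable_of_integrableOn_Iic hg) 0)

lemma continuous_integral_Ioi (hg : ∀ t, IntegrableOn g (Ioi t)) :
    Continuous fun t => ∫ s in Ioi t, g s := by
  rw [funext (integral_Ioi_eq_sub hg)]
  exact continuous_const.sub
    (intervalIntegral.continuous_primitive (intervalIntegrable_of_integrableOn_Ioi hg) 0)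

lemma hasDerivAt_integral_Iic (hg : ∀ t, IntegrableOn g (Iic t)) (hgc : Continuous g) (t : ℝ) :
    HasDerivAt (fun t => ∫ s in Iic t, g s) (g t) t := by
  rw [funext (integral_Iic_eq_add hg)]
  exact (intervalIntegral.integral_hasDerivAt_right (hgc.intervalIntegrable 0 t)
    (hgc.stronglyMeasurableAtFilter volume (𝓝 t)) hgc.continuousAt).const_add _

lemma hasDerivAt_integral_Ioi (hg : ∀ t, IntegrableOn g (Ioi t)) (hgc : Continuous g) (t : ℝ) :
    HasDerivAt (fun t => ∫ s in Ioi t, g s) (-g t) t := by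
  rw [funext (integral_Ioi_eq_sub hg)]
  exact (intervalIntegral.integral_hasDerivAt_right (hgc.intervalIntegrable 0 t)
    (hgc.stronglyMeasurableAtFilter volume (𝓝 t)) hgc.continuousAt).const_sub _

end TailIntegral

section GreenOperator

variable {ω C : ℝ} {h : ℝ → ℝ}

/-- The bounded solution of `u'' - ω ^ 2 * u = h` on `ℝ`. -/
noncomputable def greenOp (ω : ℝ) (h : ℝ → ℝ) (t : ℝ) : ℝ :=
  -(2 * ω)⁻¹ * ∫ s, exp (-ω * |t - s|) * h s

noncomputable def greenOpDeriv (ω : ℝ) (h : ℝ → ℝ) (t : ℝ) : ℝ :=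
  2⁻¹ * (exp (-ω * t) * (∫ s in Iic t, exp (ω * s) * h s)
    - exp (ω * t) * ∫ s in Ioi t, exp (-ω * s) * h s)

lemma hasDerivAt_exp_const_mul (c t : ℝ) :
    HasDerivAt (fun t => exp (c * t)) (c * exp (c * t)) t := by
  simpa [mul_comm] using ((hasDerivAt_id t).const_mul c).exp

lemma exp_neg_mul_abs_sub_of_le {s t : ℝ} (hst : s ≤ t) :
    exp (-ω * |t - s|) = exp (-ω * t) * exp (ω * s) := by
  rw [abs_of_nonneg (sub_nonneg.2 hst), ← exp_add]
  ring_nf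

lemma exp_neg_mul_abs_sub_of_ge {s t : ℝ} (hts : t ≤ s) :
    exp (-ω * |t - s|) = exp (ω * t) * exp (-ω * s) := by
  rw [abs_of_nonpos (sub_nonpos.2 hts), ← exp_add]
  ring_nf

section Bounded

variable (hω : 0 < ω) (hm : AEStronglyMeasurable h) (hb : ∀ s, |h s| ≤ C)
include hω hm hb

lemma integrableOn_exp_mul_mul_Iic (t : ℝ) :
    IntegrableOn (fun s => exp (ω * s) * h s) (Iic t) :=
  (integrableOn_exp_mul_Iic hω t).mul_bdd hm.restrict (ae_of_all _ hb)

lemma integrableOn_exp_neg_mul_mul_Ioi (t : ℝ) :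
    IntegrableOn (fun s => exp (-ω * s) * h s) (Ioi t) :=
  (integrableOn_exp_mul_Ioi (neg_lt_zero.2 hω) t).mul_bdd hm.restrict (ae_of_all _ hb)

lemma integrableOn_exp_neg_mul_abs_sub_mul_Iic (t : ℝ) :
    IntegrableOn (fun s => exp (-ω * |t - s|) * h s) (Iic t) :=
  IntegrableOn.congr_fun ((integrableOn_exp_mul_mul_Iic hω hm hb t).const_mul (exp (-ω * t)))
    (fun _ hs => by rw [exp_neg_mul_abs_sub_of_le hs, mul_assoc]) measurableSet_Iic

lemma integrableOn_exp_neg_mul_abs_sub_mul_Ioi (t : ℝ) :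
    IntegrableOn (fun s => exp (-ω * |t - s|) * h s) (Ioi t) :=
  IntegrableOn.congr_fun ((integrableOn_exp_neg_mul_mul_Ioi hω hm hb t).const_mul (exp (ω * t)))
    (fun _ hs => by rw [exp_neg_mul_abs_sub_of_ge (le_of_lt hs), mul_assoc]) measurableSet_Ioi

lemma integrable_exp_neg_mul_abs_sub_mul (t : ℝ) :
    Integrable fun s => exp (-ω * |t - s|) * h s := by
  simpa only [Iic_union_Ioi, integrableOn_univ] using
    (integrableOn_exp_neg_mul_abs_sub_mul_Iic hω hm hb t).union
      (integrableOn_exp_neg_mul_abs_sub_mul_Ioi hω hm hb t)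

lemma greenOp_eq (t : ℝ) :
    greenOp ω h t = -(2 * ω)⁻¹ * (exp (-ω * t) * (∫ s in Iic t, exp (ω * s) * h s)
      + exp (ω * t) * ∫ s in Ioi t, exp (-ω * s) * h s) := by
  rw [greenOp, ← setIntegral_univ, ← Iic_union_Ioi (a := t),
    setIntegral_union (Iic_disjoint_Ioi le_rfl) measurableSet_Ioi
      (integrableOn_exp_neg_mul_abs_sub_mul_Iic hω hm hb t)
      (integrableOn_exp_neg_mul_abs_sub_mul_Ioi hω hm hb t),
    ← integral_const_mul, ← integral_const_mul,
    setIntegral_congr_fun measurableSet_Iic fun s hs => by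
      rw [exp_neg_mul_abs_sub_of_le hs, mul_assoc],
    setIntegral_congr_fun measurableSet_Ioi fun s hs => by
      rw [exp_neg_mul_abs_sub_of_ge (le_of_lt hs), mul_assoc]]

lemma continuous_greenOp : Continuous (greenOp ω h) := by
  rw [funext (greenOp_eq hω hm hb)]
  have := continuous_integral_Iic (integrableOn_exp_mul_mul_Iic hω hm hb)
  have := continuous_integral_Ioi (integrableOn_exp_neg_mul_mul_Ioi hω hm hb)
  fun_prop

end Bounded

section Continuous

variable (hω : 0 < ω) (hb : ∀ s, |h s| ≤ C) (hc : Continuous h)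
include hω hb hc

lemma hasDerivAt_greenOp (t : ℝ) : HasDerivAt (greenOp ω h) (greenOpDeriv ω h t) t := by
  have hm : AEStronglyMeasurable h volume := hc.aestronglyMeasurable
  rw [funext (greenOp_eq hω hm hb)]
  have hA := hasDerivAt_integral_Iic (integrableOn_exp_mul_mul_Iic hω hm hb) (by fun_prop) t
  have hB := hasDerivAt_integral_Ioi (integrableOn_exp_neg_mul_mul_Ioi hω hm hb) (by fun_prop) t
  refine ((((hasDerivAt_exp_const_mul (-ω) t).mul hA).add
    ((hasDerivAt_exp_const_mul ω t).mul hB)).const_mul (-(2 * ω)⁻¹)).congr_deriv ?_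
  unfold greenOpDeriv
  field_simp
  ring

lemma hasDerivAt_greenOpDeriv (t : ℝ) :
    HasDerivAt (greenOpDeriv ω h) (ω ^ 2 * greenOp ω h t + h t) t := by
  have hm : AEStronglyMeasurable h volume := hc.aestronglyMeasurable
  have hA := hasDerivAt_integral_Iic (integrableOn_exp_mul_mul_Iic hω hm hb) (by fun_prop) t
  have hB := hasDerivAt_integral_Ioi (integrableOn_exp_neg_mul_mul_Ioi hω hm hb) (by fun_prop) t
  refine ((((hasDerivAt_exp_const_mul (-ω) t).mul hA).sub
    ((hasDerivAt_exp_const_mul ω t).mul hB)).const_mul 2⁻¹).congr_deriv ?_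
  have hexp : exp (-ω * t) * exp (ω * t) = 1 := by rw [← exp_add]; simp
  have hinv : ω * (2 * ω)⁻¹ = 2⁻¹ := by field_simp
  rw [greenOp_eq hω hm hb]
  linear_combination h t * hexp + (ω * (exp (-ω * t) * (∫ s in Iic t, exp (ω * s) * h s)
      + exp (ω * t) * ∫ s in Ioi t, exp (-ω * s) * h s)) * hinv

end Continuous

lemma greenOp_const (hω : 0 < ω) (c t : ℝ) : greenOp ω (fun _ => c) t = -c / ω ^ 2 := by
  have hexp : exp (-ω * t) * exp (ω * t) = 1 := by rw [← exp_add]; simp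
  rw [greenOp_eq hω aestronglyMeasurable_const (fun _ => le_rfl), integral_mul_const,
    integral_mul_const, integral_exp_mul_Iic hω, integral_exp_mul_Ioi (neg_lt_zero.2 hω)]
  simp only [neg_mul] at hexp ⊢
  field_simp
  linear_combination (-2 * c) * hexp

lemma greenOp_anti (hω : 0 < ω) {h₁ h₂ : ℝ → ℝ} {C₁ C₂ : ℝ}
    (hm₁ : AEStronglyMeasurable h₁) (hb₁ : ∀ s, |h₁ s| ≤ C₁)
    (hm₂ : AEStronglyMeasurable h₂) (hb₂ : ∀ s, |h₂ s| ≤ C₂)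
    (hle : ∀ s, h₁ s ≤ h₂ s) (t : ℝ) : greenOp ω h₂ t ≤ greenOp ω h₁ t := by
  unfold greenOp
  refine mul_le_mul_of_nonpos_left ?_ (by simp only [neg_nonpos]; positivity)
  exact integral_mono (integrable_exp_neg_mul_abs_sub_mul hω hm₁ hb₁ t)
    (integrable_exp_neg_mul_abs_sub_mul hω hm₂ hb₂ t)
    fun s => mul_le_mul_of_nonneg_left (hle s) (exp_pos _).le

lemma greenOp_mem_Icc (hω : 0 < ω) {c d : ℝ} (hm : AEStronglyMeasurable h)
    (hh : ∀ s, h s ∈ Icc c d) (t : ℝ) : greenOp ω h t ∈ Icc (-d / ω ^ 2) (-c / ω ^ 2) := by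
  have hb : ∀ s, |h s| ≤ max |c| |d| := fun s => abs_le_max_abs_abs (hh s).1 (hh s).2
  rw [← greenOp_const hω d t, ← greenOp_const hω c t]
  exact ⟨greenOp_anti hω hm hb aestronglyMeasurable_const (fun _ => le_rfl) (fun s => (hh s).2) t,
    greenOp_anti hω aestronglyMeasurable_const (fun _ => le_rfl) hm hb (fun s => (hh s).1) t⟩

lemma greenOp_periodic {T : ℝ} (hper : Function.Periodic h T) :
    Function.Periodic (greenOp ω h) T := fun t => by
  unfold greenOp
  rw [← integral_add_right_eq_self _ T]
  simp only [hper _, add_sub_add_right_eq_sub]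

lemma tendsto_greenOp (hω : 0 < ω) {hs : ℕ → ℝ → ℝ} (hm : ∀ n, AEStronglyMeasurable (hs n))
    (hb : ∀ n s, |hs n s| ≤ C) (hlim : ∀ s, Tendsto (fun n => hs n s) atTop (𝓝 (h s)))
    (t : ℝ) : Tendsto (fun n => greenOp ω (hs n) t) atTop (𝓝 (greenOp ω h t)) := by
  refine Tendsto.const_mul _ (tendsto_integral_of_dominated_convergence _
    (fun n => (integrable_exp_neg_mul_abs_sub_mul hω (hm n) (hb n) t).aestronglyMeasurable)
    (integrable_exp_neg_mul_abs_sub_mul hω aestronglyMeasurable_const (C := |C|)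
      (fun _ => le_rfl) t)
    (fun n => ae_of_all _ fun s => ?_) (ae_of_all _ fun s => (hlim s).const_mul _))
  rw [norm_mul, norm_of_nonneg (exp_pos _).le]
  exact mul_le_mul_of_nonneg_left (hb n s) (exp_pos _).le

end GreenOperator

section LowerUpper

variable {ω a b T : ℝ} {F : ℝ → ℝ → ℝ} {u : ℝ → ℝ}

/-- Its fixed points are the bounded solutions of `u'' = F t u`. -/
noncomputable def shiftedGreenOp (ω : ℝ) (F : ℝ → ℝ → ℝ) (u : ℝ → ℝ) : ℝ → ℝ :=
  greenOp ω fun s => F s (u s) - ω ^ 2 * u s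

lemma measurable_shifted (hF : Continuous fun p : ℝ × ℝ => F p.1 p.2) (hu : Measurable u) :
    Measurable fun s => F s (u s) - ω ^ 2 * u s :=
  (hF.measurable.comp (measurable_id.prodMk hu)).sub (measurable_const.mul hu)

lemma shiftedGreenOp_periodic (hper : Function.Periodic F T) (hu : Function.Periodic u T) :
    Function.Periodic (shiftedGreenOp ω F u) T :=
  greenOp_periodic fun s => by simp only [hu s, hper s]

variable (hω : 0 < ω) (hF : Continuous fun p : ℝ × ℝ => F p.1 p.2)
  (hanti : ∀ t, AntitoneOn (fun x => F t x - ω ^ 2 * x) (Icc a b))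
  (ha : ∀ t, F t a ≤ 0) (hb : ∀ t, 0 ≤ F t b)

section Barriers

include hanti ha hb

lemma shifted_mem_Icc {t x : ℝ} (hx : x ∈ Icc a b) :
    F t x - ω ^ 2 * x ∈ Icc (-(ω ^ 2 * b)) (-(ω ^ 2 * a)) :=
  ⟨by linarith [hanti t hx ⟨hx.1.trans hx.2, le_rfl⟩ hx.2, hb t],
    by linarith [hanti t ⟨le_rfl, hx.1.trans hx.2⟩ hx hx.1, ha t]⟩

lemma abs_shifted_le {t x : ℝ} (hx : x ∈ Icc a b) :
    |F t x - ω ^ 2 * x| ≤ max |-(ω ^ 2 * b)| |-(ω ^ 2 * a)| :=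
  abs_le_max_abs_abs (shifted_mem_Icc hanti ha hb hx).1 (shifted_mem_Icc hanti ha hb hx).2

include hω hF

lemma shiftedGreenOp_mem_Icc (hu : Measurable u) (hmem : ∀ t, u t ∈ Icc a b) (t : ℝ) :
    shiftedGreenOp ω F u t ∈ Icc a b := by
  have := greenOp_mem_Icc hω (measurable_shifted hF hu).aestronglyMeasurable
    (fun s => shifted_mem_Icc hanti ha hb (hmem s)) t
  have hω2 : ω ^ 2 ≠ 0 := by positivity
  simpa only [neg_neg, mul_div_cancel_left₀ _ hω2, shiftedGreenOp] using this

lemma shiftedGreenOp_mono {v : ℝ → ℝ} (hu : Measurable u) (hv : Measurable v)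
    (hmemu : ∀ t, u t ∈ Icc a b) (hmemv : ∀ t, v t ∈ Icc a b) (huv : ∀ t, u t ≤ v t) (t : ℝ) :
    shiftedGreenOp ω F u t ≤ shiftedGreenOp ω F v t :=
  greenOp_anti hω (measurable_shifted hF hv).aestronglyMeasurable
    (fun s => abs_shifted_le hanti ha hb (hmemv s))
    (measurable_shifted hF hu).aestronglyMeasurable
    (fun s => abs_shifted_le hanti ha hb (hmemu s))
    (fun s => hanti s (hmemu s) (hmemv s) (huv s)) t

lemma continuous_shiftedGreenOp (hu : Measurable u) (hmem : ∀ t, u t ∈ Icc a b) :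
    Continuous (shiftedGreenOp ω F u) :=
  continuous_greenOp hω (measurable_shifted hF hu).aestronglyMeasurable
    (fun s => abs_shifted_le hanti ha hb (hmem s))

lemma tendsto_shiftedGreenOp {us : ℕ → ℝ → ℝ} (hus : ∀ n, Measurable (us n))
    (hmem : ∀ n t, us n t ∈ Icc a b) (hlim : ∀ s, Tendsto (fun n => us n s) atTop (𝓝 (u s)))
    (t : ℝ) :
    Tendsto (fun n => shiftedGreenOp ω F (us n) t) atTop (𝓝 (shiftedGreenOp ω F u t)) :=
  tendsto_greenOp hω (fun n => (measurable_shifted hF (hus n)).aestronglyMeasurable)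
    (fun n s => abs_shifted_le hanti ha hb (hmem n s))
    (fun s => (((hF.comp (continuous_const.prodMk continuous_id)).sub
      (continuous_const.mul continuous_id)).tendsto (u s)).comp (hlim s)) t

lemma exists_fixedPoint_shiftedGreenOp (hper : Function.Periodic F T) (hab : a ≤ b) :
    ∃ u : ℝ → ℝ, Measurable u ∧ Function.Periodic u T ∧ (∀ t, u t ∈ Icc a b) ∧
      shiftedGreenOp ω F u = u := by
  set us : ℕ → ℝ → ℝ := fun n => (shiftedGreenOp ω F)^[n] fun _ => a
  have hsucc : ∀ n, us (n + 1) = shiftedGreenOp ω F (us n) := fun n =>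
    Function.iterate_succ_apply' _ _ _
  have hinv : ∀ n, Measurable (us n) ∧ Function.Periodic (us n) T ∧ ∀ t, us n t ∈ Icc a b := by
    intro n
    induction n with
    | zero => exact ⟨measurable_const, fun _ => rfl, fun _ => ⟨le_rfl, hab⟩⟩
    | succ n ih =>
      rw [hsucc]
      exact ⟨(continuous_shiftedGreenOp hω hF hanti ha hb ih.1 ih.2.2).measurable,
        shiftedGreenOp_periodic hper ih.2.1, shiftedGreenOp_mem_Icc hω hF hanti ha hb ih.1 ih.2.2⟩
  have hmono : Monotone us := by
    refine monotone_nat_of_le_succ fun n => ?_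
    induction n with
    | zero => exact fun t => ((hinv 1).2.2 t).1
    | succ n ih =>
      rw [hsucc n, hsucc (n + 1)]
      exact shiftedGreenOp_mono hω hF hanti ha hb (hinv n).1 (hinv (n + 1)).1 (hinv n).2.2
        (hinv (n + 1)).2.2 ih
  have hbdd : BddAbove (range us) := ⟨fun _ => b, by
    rintro _ ⟨n, rfl⟩ t
    exact ((hinv n).2.2 t).2⟩
  set u := ⨆ n, us n
  have hlim : ∀ t, Tendsto (fun n => us n t) atTop (𝓝 (u t)) :=
    tendsto_pi_nhds.1 (tendsto_atTop_ciSup hmono hbdd)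
  refine ⟨u, measurable_of_tendsto_metrizable (fun n => (hinv n).1) (tendsto_pi_nhds.2 hlim),
    fun t => tendsto_nhds_unique ((hlim (t + T)).congr fun n => (hinv n).2.1 t) (hlim t),
    fun t => isClosed_Icc.mem_of_tendsto (hlim t) (Eventually.of_forall fun n => (hinv n).2.2 t),
    funext fun t => tendsto_nhds_unique ?_ ((hlim t).comp (tendsto_add_atTop_nat 1))⟩
  simp only [Function.comp_def, hsucc]
  exact tendsto_shiftedGreenOp hω hF hanti ha hb (fun n => (hinv n).1)
    (fun n => (hinv n).2.2) hlim t

theorem exists_periodic_solution_of_lower_upper_const (hper : Function.Periodic F T)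
    (hab : a ≤ b) :
    ∃ x x' : ℝ → ℝ, (∀ t, HasDerivAt x (x' t) t) ∧ (∀ t, HasDerivAt x' (F t (x t)) t) ∧
      Function.Periodic x T ∧ ∀ t, x t ∈ Icc a b := by
  obtain ⟨u, hu, huper, hmem, hfix⟩ :=
    exists_fixedPoint_shiftedGreenOp hω hF hanti ha hb hper hab
  have hcont : Continuous u := hfix ▸ continuous_shiftedGreenOp hω hF hanti ha hb hu hmem
  set h := fun s => F s (u s) - ω ^ 2 * u s
  have hh : Continuous h := (hF.comp (continuous_id.prodMk hcont)).sub (continuous_const.mul hcont)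
  have hhb : ∀ s, |h s| ≤ _ := fun s => abs_shifted_le hanti ha hb (hmem s)
  have hgreen : greenOp ω h = u := hfix
  refine ⟨u, greenOpDeriv ω h, fun t => hgreen ▸ hasDerivAt_greenOp hω hhb hh t,
    fun t => ?_, huper, hmem⟩
  convert hasDerivAt_greenOpDeriv hω hhb hh t using 1
  rw [hgreen]
  ring

end Barriers

end LowerUpper

lemma abs_mul_sin_arctan_inv_le_cos {c L : ℝ} (hL : 0 < L) (hc : |c| ≤ L) :
    |c * sin (arctan L⁻¹)| ≤ cos (arctan L⁻¹) := by
  have hsqrt : 0 < √(1 + L⁻¹ ^ 2) := by positivity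
  rw [sin_arctan, cos_arctan, abs_mul, abs_div, abs_inv, abs_of_pos hL, abs_of_pos hsqrt,
    ← mul_div_assoc, div_le_div_iff_of_pos_right hsqrt, ← div_eq_mul_inv]
  exact div_le_one_of_le₀ hc hL.le

lemma antitone_mul_sin_sub_cos_sub_mul {c L : ℝ} (hc : |c| + 1 ≤ L) :
    Antitone fun x => c * sin x - cos x - L * x := by
  refine antitone_of_hasDerivAt_nonpos (fun x => (((hasDerivAt_sin x).const_mul c).sub
    (hasDerivAt_cos x)).sub ((hasDerivAt_id x).const_mul L)) fun x => ?_
  have : c * cos x ≤ |c| := (le_abs_self _).trans <| by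
    rw [abs_mul]; exact mul_le_of_le_one_right (abs_nonneg c) (abs_cos_le_one x)
  simp only [Pi.zero_apply, mul_one]
  linarith [sin_le_one x]

end PeriodicSolution

/-- the inverted pendulum `ẍ = f(t) sin x − cos x` with `f` continuous
and `T`-periodic has a `T`-periodic solution staying in `(0, π)`. -/
theorem stmt_7 (f : ℝ → ℝ) (T : ℝ) (hT : 0 < T)
    (hf : Continuous f) (hper : Function.Periodic f T) :
    ∃ x x' : ℝ → ℝ,
      (∀ t : ℝ, HasDerivAt x (x' t) t) ∧
      (∀ t : ℝ, HasDerivAt x' (f t * Real.sin (x t) - Real.cos (x t)) t) ∧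
      (∀ t : ℝ, x (t + T) = x t) ∧
      ∀ t : ℝ, x t ∈ Ioo 0 π := by
  obtain ⟨M, hM⟩ := isBounded_iff_forall_norm_le.1 (hper.isBounded_of_continuous hT.ne' hf)
  have hfM : ∀ t, |f t| ≤ M := fun t => hM _ (mem_range_self t)
  have hM1 : 0 < M + 1 := by linarith [abs_nonneg (f 0), hfM 0]
  set ε := arctan (M + 1)⁻¹
  have hε : 0 < ε := arctan_pos.2 (inv_pos.2 hM1)
  have hεπ : ε < π - ε := by linarith [arctan_lt_pi_div_two (M + 1)⁻¹]
  have hbarrier : ∀ t, |f t * sin ε| ≤ cos ε := fun t =>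
    PeriodicSolution.abs_mul_sin_arctan_inv_le_cos hM1 (by linarith [hfM t])
  obtain ⟨x, x', hx, hx', hxper, hxmem⟩ :=
    PeriodicSolution.exists_periodic_solution_of_lower_upper_const (a := ε) (b := π - ε) (T := T)
      (F := fun t x => f t * sin x - cos x) (sqrt_pos.2 hM1) (by fun_prop)
      (fun t => by
        simpa only [sq_sqrt hM1.le, sub_sub] using
          ((PeriodicSolution.antitone_mul_sin_sub_cos_sub_mul (by linarith [hfM t])).antitoneOn _))
      (fun t => by linarith [(abs_le.1 (hbarrier t)).2])
      (fun t => by simp only [sin_pi_sub, cos_pi_sub]; linarith [(abs_le.1 (hbarrier t)).1])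
      (fun t => funext fun x => by simp only [hper t]) hεπ.le
  exact ⟨x, x', hx, hx', hxper,
    fun t => ⟨hε.trans_le (hxmem t).1, (hxmem t).2.trans_lt (by linarith)⟩⟩
end

section
/- Let v, w : ℝ² → ℝ be C¹ with bounded derivatives, and suppose w(x,1) > a > 0 and w(x,-1) < −a for all x. Let u : ℝ → ℝ be continuous T-periodic with zero mean. Then there exists λ₀ such that for all λ ≥ λ₀, the system ẋ = v(x,y), ẏ = w(x,y) + u(λt) (assumed to have globally defined solutions in |y| ≤ 1) admits a solution with y(t) ∈ (−1,1) for every t ≥ 0. -/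
/-!
Put `z = y - δ(t)`, where `δ(t) = U(λt)/λ` and `U` is the primitive of `u`. Because `u` has zero
mean, `U` is periodic, hence bounded, so `|δ| ≤ ε` once `λ` is large, while `ż = w(x, y)`. For `ε`
small, `w > 0` near `y = 1` and `w < 0` near `y = -1` then make the levels `z = ±(1 - 2ε)`
repelling. The initial values in `[-1, 1]` whose `z` eventually leaves through the upper level,
resp. the lower one, form disjoint sets that are open by continuous dependence on initial data
(Gronwall) and contain `1`, resp. `-1`. By connectedness some initial value lies in neither, and its
solution keeps `z` between the two levels, hence `|y| ≤ 1 - ε` for all `t ≥ 0`.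
-/

open Set NNReal

theorem lipschitzWith_of_norm_fderiv_le {E F : Type*} [NormedAddCommGroup E] [NormedSpace ℝ E]
    [NormedAddCommGroup F] [NormedSpace ℝ F] {f : E → F} {C : ℝ} (hf : Differentiable ℝ f)
    (bound : ∀ x, ‖fderiv ℝ f x‖ ≤ C) : LipschitzWith C.toNNReal f :=
  lipschitzWith_of_nnnorm_fderiv_le hf fun x => NNReal.le_toNNReal_of_coe_le (bound x)

theorem exists_pos_of_lipschitzWith_of_lt {f : ℝ → ℝ → ℝ} {K : ℝ≥0}
    (hf : ∀ x, LipschitzWith K (f x)) {a y₀ : ℝ} (ha : 0 < a) (h : ∀ x, a < f x y₀) :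
    ∃ η > 0, ∀ x y, |y - y₀| ≤ η → 0 < f x y := by
  refine ⟨a / (K + 1), by positivity, fun x y hy => ?_⟩
  have hdist : |f x y - f x y₀| ≤ K * |y - y₀| := by
    simpa only [Real.dist_eq] using (hf x).dist_le_mul y y₀
  have hKη : K * (a / (K + 1)) < a := by
    rw [mul_div_assoc', div_lt_iff₀ (by positivity)]
    nlinarith
  have := mul_le_mul_of_nonneg_left hy K.coe_nonneg
  linarith [(abs_le.mp hdist).1, h x]

theorem Function.Periodic.periodic_primitive {u : ℝ → ℝ} {T : ℝ} (hu : Continuous u)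
    (hper : Function.Periodic u T) (hmean : ∫ t in (0 : ℝ)..T, u t = 0) :
    Function.Periodic (fun t => ∫ s in (0 : ℝ)..t, u s) T := fun t => by
  simpa [hmean] using hper.intervalIntegral_add_eq_add 0 t (hu.intervalIntegrable)

theorem Function.Periodic.exists_primitive_comp_mul_abs_le {u : ℝ → ℝ} {T : ℝ} (hT : T ≠ 0)
    (hu : Continuous u) (hper : Function.Periodic u T) (hmean : ∫ t in (0 : ℝ)..T, u t = 0) :
    ∃ M, ∀ lam > 0, ∃ δ : ℝ → ℝ, (∀ t, HasDerivAt δ (u (lam * t)) t) ∧ ∀ t, |δ t| ≤ M / lam := by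
  set U := fun t => ∫ s in (0 : ℝ)..t, u s
  have hU : ∀ t, HasDerivAt U (u t) t := fun t => (hu.integral_hasStrictDerivAt 0 t).hasDerivAt
  obtain ⟨M, hM⟩ := isBounded_iff_forall_norm_le.mp <|
    (hper.periodic_primitive hu hmean).isBounded_of_continuous hT
      (continuous_iff_continuousAt.mpr fun t => (hU t).continuousAt)
  refine ⟨M, fun lam hlam => ⟨fun t => U (lam * t) / lam, fun t => ?_, fun t => ?_⟩⟩
  · simpa [mul_div_assoc, hlam.ne'] using
      ((hU (lam * t)).comp t ((hasDerivAt_id t).const_mul lam)).div_const lam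
  · rw [abs_div, abs_of_pos hlam]
    exact div_le_div_of_nonneg_right (hM _ (mem_range_self _)) hlam.le

theorem le_of_hasDerivAt_neg_at_level {f f' : ℝ → ℝ} {a b c : ℝ}
    (hf : ∀ x, HasDerivAt f (f' x) x) (hc : ∀ x, f x = c → f' x < 0)
    (ha : f a ≤ c) (hab : a ≤ b) : f b ≤ c :=
  image_le_of_deriv_right_lt_deriv_boundary (B := fun _ => c) (B' := 0)
    (fun x _ => (hf x).continuousAt.continuousWithinAt) (fun x _ => (hf x).hasDerivWithinAt)
    ha (fun _ => hasDerivAt_const _ _) (fun x _ hx => hc x hx) ⟨hab, le_rfl⟩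

theorem ge_of_hasDerivAt_pos_at_level {f f' : ℝ → ℝ} {a b c : ℝ}
    (hf : ∀ x, HasDerivAt f (f' x) x) (hc : ∀ x, f x = c → 0 < f' x)
    (ha : c ≤ f a) (hab : a ≤ b) : c ≤ f b :=
  neg_le_neg_iff.mp <| le_of_hasDerivAt_neg_at_level (f := -f) (fun x => (hf x).neg)
    (fun x hx => neg_neg_iff_pos.mpr (hc x (neg_inj.mp hx))) (neg_le_neg ha) hab

theorem exists_forall_mem_Icc_of_repelling_levels {P : Type*} [TopologicalSpace P]
    [PreconnectedSpace P] {Z Z' : P → ℝ → ℝ} {c d : ℝ} (hdc : d ≤ c)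
    (hZ : ∀ p t, HasDerivAt (Z p) (Z' p t) t) (hcont : ∀ t, 0 ≤ t → Continuous fun p => Z p t)
    (hc : ∀ p t, Z p t = c → 0 < Z' p t) (hd : ∀ p t, Z p t = d → Z' p t < 0)
    (hc₀ : ∃ p, c < Z p 0) (hd₀ : ∃ p, Z p 0 < d) :
    ∃ p, ∀ t, 0 ≤ t → Z p t ∈ Icc d c := by
  set A := ⋃ t ∈ Ici (0 : ℝ), {p | c < Z p t}
  set B := ⋃ t ∈ Ici (0 : ℝ), {p | Z p t < d}
  have hA : IsOpen A := isOpen_biUnion fun t ht => isOpen_lt continuous_const (hcont t ht)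
  have hB : IsOpen B := isOpen_biUnion fun t ht => isOpen_lt (hcont t ht) continuous_const
  have hAB : Disjoint A B := by
    refine Set.disjoint_left.mpr fun p hpA hpB => ?_
    simp only [A, B, mem_iUnion, mem_ofPred_eq] at hpA hpB
    obtain ⟨t, -, hpt⟩ := hpA
    obtain ⟨s, -, hps⟩ := hpB
    rcases le_total t s with hts | hst
    · linarith [ge_of_hasDerivAt_pos_at_level (hZ p) (hc p) hpt.le hts]
    · linarith [le_of_hasDerivAt_neg_at_level (hZ p) (hd p) hps.le hst]
  obtain ⟨p, hpA, hpB⟩ : ∃ p, p ∉ A ∧ p ∉ B := by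
    by_contra! h
    obtain ⟨p, hpA, hpB⟩ := nonempty_inter hA hB
      (eq_univ_of_forall fun p => or_iff_not_imp_left.mpr (h p))
      (hc₀.imp fun p hp => mem_biUnion (le_refl (0 : ℝ)) hp)
      (hd₀.imp fun p hp => mem_biUnion (le_refl (0 : ℝ)) hp)
    exact hAB.notMem_of_mem_left hpA hpB
  simp only [A, B, mem_iUnion, mem_ofPred_eq, not_exists, not_lt] at hpA hpB
  exact ⟨p, fun t ht => ⟨hpB t ht, hpA t ht⟩⟩

theorem continuous_solution_of_lipschitz {P E : Type*} [TopologicalSpace P]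
    [NormedAddCommGroup E] [NormedSpace ℝ E] {V : ℝ → E → E} {K : ℝ≥0}
    (hV : ∀ t, LipschitzWith K (V t)) {F : P → ℝ → E}
    (hF : ∀ p t, HasDerivAt (F p) (V t (F p t)) t) (h₀ : Continuous fun p => F p 0)
    {t : ℝ} (ht : 0 ≤ t) : Continuous fun p => F p t := by
  have hgron : ∀ p q, dist (F p t) (F q t) ≤ dist (F p 0) (F q 0) * Real.exp (K * t) := by
    intro p q
    simpa using dist_le_of_trajectories_ODE hV
      (fun s _ => (hF p s).continuousAt.continuousWithinAt) (fun s _ => (hF p s).hasDerivWithinAt)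
      (fun s _ => (hF q s).continuousAt.continuousWithinAt) (fun s _ => (hF q s).hasDerivWithinAt)
      le_rfl t ⟨ht, le_rfl⟩
  rw [Metric.continuous_iff']
  intro p ε hε
  filter_upwards [Metric.continuous_iff'.mp h₀ p (ε / Real.exp (K * t)) (by positivity)] with q hq
  calc dist (F q t) (F p t) ≤ dist (F q 0) (F p 0) * Real.exp (K * t) := hgron q p
    _ < ε := (lt_div_iff₀ (Real.exp_pos _)).mp hq

theorem exists_trapped_solution_of_small_primitive {v w : ℝ → ℝ → ℝ} {g δ : ℝ → ℝ}
    {Kv Kw : ℝ≥0} {ε : ℝ} (hv : LipschitzWith Kv fun p : ℝ × ℝ => v p.1 p.2)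
    (hw : LipschitzWith Kw fun p : ℝ × ℝ => w p.1 p.2) (hε : 0 < ε)
    (htop : ∀ x y, |y - 1| ≤ 3 * ε → 0 < w x y) (hbot : ∀ x y, |y + 1| ≤ 3 * ε → w x y < 0)
    (hδ : ∀ t, HasDerivAt δ (g t) t) (hδε : ∀ t, |δ t| ≤ ε)
    (hsol : ∀ p : ℝ × ℝ, |p.2| ≤ 1 → ∃ x y : ℝ → ℝ,
      x 0 = p.1 ∧ y 0 = p.2 ∧
      (∀ t : ℝ, HasDerivAt x (v (x t) (y t)) t) ∧
      (∀ t : ℝ, HasDerivAt y (w (x t) (y t) + g t) t)) :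
    ∃ x y : ℝ → ℝ,
      (∀ t : ℝ, HasDerivAt x (v (x t) (y t)) t) ∧
      (∀ t : ℝ, HasDerivAt y (w (x t) (y t) + g t) t) ∧
      ∀ t : ℝ, 0 ≤ t → y t ∈ Ioo (-1 : ℝ) 1 := by
  -- otherwise `htop` and `hbot` would give opposite signs to `w 0 0`
  have hε2 : ε ≤ 1 / 2 := by
    by_contra! h
    exact lt_asymm (htop 0 0 (by norm_num; linarith)) (hbot 0 0 (by norm_num; linarith))
  have hδ' := fun t => abs_le.mp (hδε t)
  -- index the solutions by all of `ℝ` through the clamp `projIcc`, a connected parameter space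
  have hI : (-1 : ℝ) ≤ 1 := by norm_num
  choose X Y hX₀ hY₀ hX hY using fun s : ℝ =>
    hsol (0, projIcc (-1) 1 hI s) (abs_le.mpr (projIcc (-1) 1 hI s).2)
  have hXY : ∀ s t, HasDerivAt (fun t => (X s t, Y s t))
      ((fun t (p : ℝ × ℝ) => (v p.1 p.2, w p.1 p.2 + g t)) t (X s t, Y s t)) t :=
    fun s t => (hX s t).prodMk (hY s t)
  have hV : ∀ t, LipschitzWith (max Kv Kw) fun p : ℝ × ℝ => (v p.1 p.2, w p.1 p.2 + g t) :=
    fun t => hv.prodMk (((isometry_add_right (g t)).lipschitz.comp hw).weaken (one_mul Kw).le)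
  have hXY₀ : Continuous fun s => (X s 0, Y s 0) := by
    simp only [hX₀, hY₀]
    fun_prop
  set Z := fun s t => Y s t - δ t
  obtain ⟨s, hs⟩ := exists_forall_mem_Icc_of_repelling_levels (Z := Z)
    (c := 1 - 2 * ε) (d := -1 + 2 * ε) (by linarith) (fun s t => (hY s t).sub (hδ t))
    (fun t ht => (continuous_snd.comp (continuous_solution_of_lipschitz hV hXY hXY₀ ht)).sub
      continuous_const)
    (fun s t hst => by
      have : Y s t - δ t = 1 - 2 * ε := hst
      rw [add_sub_cancel_right]
      exact htop _ _ (abs_le.mpr ⟨by linarith [hδ' t], by linarith [hδ' t]⟩))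
    (fun s t hst => by
      have : Y s t - δ t = -1 + 2 * ε := hst
      rw [add_sub_cancel_right]
      exact hbot _ _ (abs_le.mpr ⟨by linarith [hδ' t], by linarith [hδ' t]⟩))
    ⟨1, by simp [Z, hY₀]; linarith [hδ' 0]⟩
    ⟨-1, by simp [Z, hY₀]; linarith [hδ' 0]⟩
  refine ⟨X s, Y s, hX s, hY s, fun t ht => ?_⟩
  obtain ⟨hlo, hhi⟩ : -1 + 2 * ε ≤ Y s t - δ t ∧ Y s t - δ t ≤ 1 - 2 * ε := hs t ht
  constructor <;> linarith [hδ' t]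

/-- Theorem 2.3 of the paper: trapping in the strip survives a rapidly
oscillating zero-mean periodic perturbation `u(λt)` of the vertical component. -/
theorem stmt_10
    (v w : ℝ → ℝ → ℝ) (u : ℝ → ℝ) (a T : ℝ)
    (hv : ContDiff ℝ 1 (fun p : ℝ × ℝ => v p.1 p.2))
    (hw : ContDiff ℝ 1 (fun p : ℝ × ℝ => w p.1 p.2))
    -- v, w and their first derivatives are bounded
    (hbd : ∃ C : ℝ, ∀ p : ℝ × ℝ,
      |v p.1 p.2| ≤ C ∧ |w p.1 p.2| ≤ C ∧
      ‖fderiv ℝ (fun q : ℝ × ℝ => v q.1 q.2) p‖ ≤ C ∧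
      ‖fderiv ℝ (fun q : ℝ × ℝ => w q.1 q.2) p‖ ≤ C)
    (ha : 0 < a)
    (htop : ∀ x : ℝ, a < w x 1)
    (hbot : ∀ x : ℝ, w x (-1) < -a)
    (hT : 0 < T)
    (hu : Continuous u) (hper : Function.Periodic u T)
    (hmean : ∫ t in (0 : ℝ)..T, u t = 0) :
    ∃ lam₀ : ℝ, ∀ lam ≥ lam₀,
      -- assuming all solutions starting in the strip |y| ≤ 1 are globally defined
      (∀ p : ℝ × ℝ, |p.2| ≤ 1 → ∃ x y : ℝ → ℝ,
        x 0 = p.1 ∧ y 0 = p.2 ∧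
        (∀ t : ℝ, HasDerivAt x (v (x t) (y t)) t) ∧
        (∀ t : ℝ, HasDerivAt y (w (x t) (y t) + u (lam * t)) t)) →
      ∃ x y : ℝ → ℝ,
        (∀ t : ℝ, HasDerivAt x (v (x t) (y t)) t) ∧
        (∀ t : ℝ, HasDerivAt y (w (x t) (y t) + u (lam * t)) t) ∧
        ∀ t : ℝ, 0 ≤ t → y t ∈ Ioo (-1 : ℝ) 1 := by
  obtain ⟨C, hC⟩ := hbd
  have hvL := lipschitzWith_of_norm_fderiv_le (hv.differentiable one_ne_zero) fun p => (hC p).2.2.1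
  have hwL := lipschitzWith_of_norm_fderiv_le (hw.differentiable one_ne_zero) fun p => (hC p).2.2.2
  have hwy : ∀ x, LipschitzWith C.toNNReal (w x) := fun x =>
    (hwL.comp (LipschitzWith.prodMk_left x)).weaken (mul_one _).le
  obtain ⟨η₁, hη₁, hpos⟩ := exists_pos_of_lipschitzWith_of_lt hwy ha htop
  obtain ⟨η₂, hη₂, hneg⟩ := exists_pos_of_lipschitzWith_of_lt (f := fun x y => -w x y)
    (fun x => (hwy x).neg) ha fun x => lt_neg_of_lt_neg (hbot x)
  obtain ⟨ε, hε, hεη₁, hεη₂⟩ : ∃ ε > 0, 3 * ε ≤ η₁ ∧ 3 * ε ≤ η₂ :=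
    ⟨min η₁ η₂ / 3, by positivity, by linarith [min_le_left η₁ η₂],
      by linarith [min_le_right η₁ η₂]⟩
  obtain ⟨M, hM⟩ := hper.exists_primitive_comp_mul_abs_le hT.ne' hu hmean
  refine ⟨max 1 (M / ε), fun lam hlam₀ hsol => ?_⟩
  have hlam : 0 < lam := one_pos.trans_le (le_of_max_le_left hlam₀)
  obtain ⟨δ, hδ, hδM⟩ := hM lam hlam
  refine exists_trapped_solution_of_small_primitive hvL hwL hε
    (fun x y hy => hpos x y (hy.trans hεη₁))
    (fun x y hy => neg_pos.mp (hneg x y (by rw [sub_neg_eq_add]; linarith)))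
    hδ (fun t => (hδM t).trans ?_) hsol
  rw [div_le_iff₀ hlam, ← div_le_iff₀' hε]
  exact le_of_max_le_right hlam₀
end

section
/- Suppose x(t) solves ẍ = f(t) sin x − cos x with f bounded (|f| ≤ F), x(t₀) ∈ [0, δ], ẋ(t₀) ∈ [−δ, δ], for δ small enough (depending only on F). Then there exist ε > 0 and τ > 0, depending only on F and δ, such that x(t₀ + t') = −ε for some t' ∈ [0, τ]. -/
open Set Real

/-!
For `|x| ≤ η` small the force `f(t) sin x − cos x` is at most `F·η − cos η ≤ −1/2`, so as long as the
solution stays in the band `|x| ≤ η` it lies below the parabola `δ + δ s − s²/4`. That parabola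
never reaches `η`, so the solution cannot leave the band upwards, and it dips below `−δ` before
`s = 4`; by continuity it takes the value `−δ` on the way.
-/

lemma mul_sin_sub_cos_le_neg_half {a u F η : ℝ} (ha : |a| ≤ F) (hu : |u| ≤ η)
    (hη : F * η + η ^ 2 / 2 ≤ 1 / 2) : a * sin u - cos u ≤ -1 / 2 := by
  have hF : 0 ≤ F := (abs_nonneg a).trans ha
  have hsin : a * sin u ≤ F * η :=
    calc a * sin u ≤ |a| * |sin u| := (le_abs_self _).trans (abs_mul _ _).le
      _ ≤ F * η := mul_le_mul ha (abs_sin_le_abs.trans hu) (abs_nonneg _) hF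
  have hsq : u ^ 2 ≤ η ^ 2 := sq_le_sq' (neg_le_of_abs_le hu) (le_of_abs_le hu)
  linarith [one_sub_sq_div_two_le_cos (x := u)]

lemma nonpos_of_hasDerivAt_nonpos {g g' : ℝ → ℝ} {T : ℝ} (hg : ∀ t, HasDerivAt g (g' t) t)
    (hg' : ∀ t ∈ Ioo 0 T, g' t ≤ 0) (h0 : g 0 ≤ 0) : ∀ t ∈ Icc 0 T, g t ≤ 0 := by
  have hanti : AntitoneOn g (Icc 0 T) :=
    antitoneOn_of_hasDerivWithinAt_nonpos (convex_Icc 0 T)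
      (fun t _ ↦ (hg t).continuousAt.continuousWithinAt)
      (fun t _ ↦ (hg t).hasDerivWithinAt) (by simpa only [interior_Icc] using hg')
  exact fun t ht ↦ (hanti ⟨le_rfl, ht.1.trans ht.2⟩ ht ht.1).trans h0

lemma le_quadratic_of_hasDerivAt_le {y y' y'' : ℝ → ℝ} {c T : ℝ}
    (hy : ∀ t, HasDerivAt y (y' t) t) (hy' : ∀ t, HasDerivAt y' (y'' t) t)
    (hy'' : ∀ t ∈ Ioo 0 T, y'' t ≤ -c) :
    ∀ t ∈ Icc 0 T, y t ≤ y 0 + y' 0 * t - c * t ^ 2 / 2 := by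
  have hg : ∀ t, HasDerivAt (fun t ↦ y t - (y 0 + y' 0 * t - c * t ^ 2 / 2))
      (y' t - (y' 0 - c * t)) t := fun t ↦ by
    refine ((hy t).sub (((hasDerivAt_id' t).const_mul (y' 0)).const_add (y 0) |>.sub
      (((hasDerivAt_pow 2 t).const_mul c).div_const 2))).congr_deriv ?_
    ring
  have hg' : ∀ t, HasDerivAt (fun t ↦ y' t - (y' 0 - c * t)) (y'' t + c) t := fun t ↦ by
    refine ((hy' t).sub (((hasDerivAt_id' t).const_mul c).const_sub (y' 0))).congr_deriv ?_
    ring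
  have hslope : ∀ t ∈ Icc 0 T, y' t - (y' 0 - c * t) ≤ 0 :=
    nonpos_of_hasDerivAt_nonpos hg' (fun t ht ↦ by linarith [hy'' t ht]) (by simp)
  intro t ht
  have := nonpos_of_hasDerivAt_nonpos hg (fun s hs ↦ hslope s (Ioo_subset_Icc_self hs))
    (by simp) t ht
  linarith

lemma forall_lt_of_forall_lt_before {y : ℝ → ℝ} {T η : ℝ} (hy : ContinuousOn y (Icc 0 T))
    (hstep : ∀ s ∈ Icc 0 T, (∀ r ∈ Ico 0 s, y r < η) → y s < η) :
    ∀ s ∈ Icc 0 T, y s < η := by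
  by_contra! hD
  set D := {s ∈ Icc 0 T | η ≤ y s}
  have hDclosed : IsClosed D := hy.preimage_isClosed_of_isClosed isClosed_Icc isClosed_Ici
  have hDbdd : BddBelow D := ⟨0, fun s hs ↦ hs.1.1⟩
  have hfirst : sInf D ∈ D := hDclosed.csInf_mem hD hDbdd
  refine (hstep _ hfirst.1 fun r hr ↦ ?_).not_ge hfirst.2
  by_contra! hr'
  exact (csInf_le hDbdd ⟨⟨hr.1, hr.2.le.trans hfirst.1.2⟩, hr'⟩).not_gt hr.2

lemma exists_eq_neg_of_accel_le_neg_half {y y' a : ℝ → ℝ} {δ η : ℝ} (hδ : 0 < δ)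
    (hδη : 3 * δ ≤ η) (hη : η ≤ 1 / 2)
    (hy : ∀ t, HasDerivAt y (y' t) t) (hy' : ∀ t, HasDerivAt y' (a t) t)
    (ha : ∀ t, |y t| ≤ η → a t ≤ -1 / 2) (h0 : y 0 ∈ Icc 0 δ) (h0' : y' 0 ≤ δ) :
    ∃ t ∈ Icc (0 : ℝ) 4, y t = -δ := by
  by_contra! hne
  have hcont : ContinuousOn y (Icc 0 4) := fun t _ ↦ (hy t).continuousAt.continuousWithinAt
  have hlow : ∀ t ∈ Icc (0 : ℝ) 4, -δ < y t := by
    intro t ht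
    by_contra! hle
    obtain ⟨s, hs, hys⟩ := intermediate_value_Icc' ht.1 (hcont.mono (Icc_subset_Icc_right ht.2))
      ⟨hle, by linarith [h0.1]⟩
    exact hne s ⟨hs.1, hs.2.trans ht.2⟩ hys
  have hbelow : ∀ T ∈ Icc (0 : ℝ) 4, (∀ t ∈ Ico 0 T, y t < η) →
      y T ≤ δ + δ * T - T ^ 2 / 4 := by
    intro T hT hband
    have := le_quadratic_of_hasDerivAt_le (c := 1 / 2) hy hy' (fun t ht ↦ by
      linarith [ha t (abs_le.2 ⟨by linarith [hlow t ⟨ht.1.le, ht.2.le.trans hT.2⟩],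
        (hband t (Ioo_subset_Ico_self ht)).le⟩)]) T ⟨hT.1, le_rfl⟩
    nlinarith [h0.2, hT.1]
  have hup : ∀ t ∈ Icc (0 : ℝ) 4, y t < η := forall_lt_of_forall_lt_before hcont
    fun T hT hband ↦ (hbelow T hT hband).trans_lt (by nlinarith [sq_nonneg (T / 2 - δ)])
  have := hbelow 4 ⟨by norm_num, le_rfl⟩ fun t ht ↦ hup t ⟨ht.1, ht.2.le⟩
  linarith [hlow 4 ⟨by norm_num, le_rfl⟩]

/-- uniform exit estimate near the lower boundary `x = 0` for the
pendulum equation `ẍ = f(t) sin x − cos x` with bounded forcing. -/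
theorem stmt_17 (F : ℝ) (hF : 0 ≤ F) :
    ∃ δ₀ > (0 : ℝ), ∀ δ : ℝ, 0 < δ → δ ≤ δ₀ →
      ∃ ε > (0 : ℝ), ∃ τ > (0 : ℝ),
        ∀ (f x x' : ℝ → ℝ) (t₀ : ℝ),
          (∀ t : ℝ, |f t| ≤ F) →
          (∀ t : ℝ, HasDerivAt x (x' t) t) →
          (∀ t : ℝ, HasDerivAt x' (f t * Real.sin (x t) - Real.cos (x t)) t) →
          x t₀ ∈ Icc 0 δ → x' t₀ ∈ Icc (-δ) δ →
          ∃ t' ∈ Icc (0 : ℝ) τ, x (t₀ + t') = -ε := by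
  set η : ℝ := 1 / (4 * (F + 1))
  have hη : η ≤ 1 / 4 := by
    rw [div_le_div_iff₀ (by positivity) (by norm_num)]; linarith
  have hFη : F * η ≤ 1 / 4 := by
    rw [mul_one_div, div_le_div_iff₀ (by positivity) (by norm_num)]; linarith
  have hforce : F * η + η ^ 2 / 2 ≤ 1 / 2 := by nlinarith [show 0 < η by positivity]
  refine ⟨η / 3, by positivity, fun δ hδ hδη ↦ ⟨δ, hδ, 4, by norm_num, ?_⟩⟩
  intro f x x' t₀ hf hx hx' hx0 hx'0
  exact exists_eq_neg_of_accel_le_neg_half hδ (by linarith) (by linarith)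
    (fun t ↦ (hx (t₀ + t)).comp_const_add t₀ t) (fun t ↦ (hx' (t₀ + t)).comp_const_add t₀ t)
    (fun t ht ↦ mul_sin_sub_cos_le_neg_half (hf _) ht hforce)
    (by simpa only [add_zero] using hx0) (by simpa only [add_zero] using hx'0.2)
end
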